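/- Let n ≥ 1, a ∈ ℝ, and let U ∈ C^∞(ℂ^{n-1} × (0,∞) × ℝ, ℂ). Define u on {(z,t) ∈ ℂⁿ × ℝ : z_n ≠ 0} by u(z,t) = U(ẑ, |z_n|, t), where ẑ = (z_1,…,z_{n-1}). Then for every (z,t) with z_n ≠ 0, writing ρ = |z_n|: ℒ_a u(z,t) = ρ² ( ℒ'U + (a+1) ρ^{-1} ∂U/∂ρ + ∂²U/∂ρ² + 4ρ² ∂²U/∂t² )(ẑ, ρ, t), where ℒ' = Σ_{j=1}^{n-1} ((∂/∂x_j + 2y_j ∂/∂t)² + (∂/∂y_j − 2x_j ∂/∂t)²) is the CR Laplacian of H^{2n-1} acting in the variables (ẑ, t). -/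

import Mathlib

/-- Directional derivative: `pdv v u x = (fderiv ℝ u x) v`. -/
noncomputable def pdv {E F : Type*} [NormedAddCommGroup E] [NormedSpace ℝ E]
    [NormedAddCommGroup F] [NormedSpace ℝ F] (v : E) (u : E → F) (x : E) : F :=
  fderiv ℝ u x v

/-- The vector field `∂/∂x_j + 2 y_j ∂/∂t` on `H^{2n+1} = ℂⁿ × ℝ` (writing `z_j = x_j + i y_j`). -/
noncomputable def opA {n : ℕ} (j : Fin n) (u : (Fin n → ℂ) × ℝ → ℂ)
    (x : (Fin n → ℂ) × ℝ) : ℂ :=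
  pdv (Pi.single j 1, (0 : ℝ)) u x +
    ((2 * (x.1 j).im : ℝ) : ℂ) * pdv ((0 : Fin n → ℂ), (1 : ℝ)) u x

/-- The vector field `∂/∂y_j − 2 x_j ∂/∂t` on `H^{2n+1} = ℂⁿ × ℝ`. -/
noncomputable def opB {n : ℕ} (j : Fin n) (u : (Fin n → ℂ) × ℝ → ℂ)
    (x : (Fin n → ℂ) × ℝ) : ℂ :=
  pdv (Pi.single j Complex.I, (0 : ℝ)) u x -
    ((2 * (x.1 j).re : ℝ) : ℂ) * pdv ((0 : Fin n → ℂ), (1 : ℝ)) u x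

/-- The CR Laplacian `ℒ = Σ_j ((∂/∂x_j + 2y_j ∂/∂t)² + (∂/∂y_j − 2x_j ∂/∂t)²)` on `H^{2n+1}`. -/
noncomputable def crLap (n : ℕ) (u : (Fin n → ℂ) × ℝ → ℂ) (x : (Fin n → ℂ) × ℝ) : ℂ :=
  ∑ j : Fin n, (opA j (opA j u) x + opB j (opB j u) x)

/-- The operator `ℒ_a = |z_n|² ℒ + a (x_n ∂/∂x_n + y_n ∂/∂y_n)` on `H^{2n+1}`. -/
noncomputable def crLapA (n : ℕ) (hn : 0 < n) (a : ℝ) (u : (Fin n → ℂ) × ℝ → ℂ)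
    (x : (Fin n → ℂ) × ℝ) : ℂ :=
  ((‖x.1 ⟨n - 1, Nat.sub_lt hn Nat.one_pos⟩‖ ^ 2 : ℝ) : ℂ) * crLap n u x
    + (a : ℂ) * (((x.1 ⟨n - 1, Nat.sub_lt hn Nat.one_pos⟩).re : ℂ) *
        pdv (Pi.single (⟨n - 1, Nat.sub_lt hn Nat.one_pos⟩ : Fin n) 1, (0 : ℝ)) u x
      + ((x.1 ⟨n - 1, Nat.sub_lt hn Nat.one_pos⟩).im : ℂ) *
        pdv (Pi.single (⟨n - 1, Nat.sub_lt hn Nat.one_pos⟩ : Fin n) Complex.I, (0 : ℝ)) u x)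

/-- The vector field `∂/∂x_j + 2 y_j ∂/∂t` on `ℂ^m × ℝ_ρ × ℝ_t`, acting in the variables
`(ẑ, t)` only. -/
noncomputable def opA' {m : ℕ} (j : Fin m) (U : (Fin m → ℂ) × ℝ × ℝ → ℂ)
    (p : (Fin m → ℂ) × ℝ × ℝ) : ℂ :=
  pdv (Pi.single j 1, (0 : ℝ), (0 : ℝ)) U p +
    ((2 * (p.1 j).im : ℝ) : ℂ) * pdv ((0 : Fin m → ℂ), (0 : ℝ), (1 : ℝ)) U p

/-- The vector field `∂/∂y_j − 2 x_j ∂/∂t` on `ℂ^m × ℝ_ρ × ℝ_t`. -/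
noncomputable def opB' {m : ℕ} (j : Fin m) (U : (Fin m → ℂ) × ℝ × ℝ → ℂ)
    (p : (Fin m → ℂ) × ℝ × ℝ) : ℂ :=
  pdv (Pi.single j Complex.I, (0 : ℝ), (0 : ℝ)) U p -
    ((2 * (p.1 j).re : ℝ) : ℂ) * pdv ((0 : Fin m → ℂ), (0 : ℝ), (1 : ℝ)) U p

/-- The CR Laplacian `ℒ'` of `H^{2m+1}`, acting on functions of `(ẑ, ρ, t)` in the variables
`(ẑ, t)`. -/
noncomputable def crLap' (m : ℕ) (U : (Fin m → ℂ) × ℝ × ℝ → ℂ)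
    (p : (Fin m → ℂ) × ℝ × ℝ) : ℂ :=
  ∑ j : Fin m, (opA' j (opA' j U) p + opB' j (opB' j U) p)


noncomputable def cabsD (z : ℂ) : ℂ →L[ℝ] ℝ :=
  (‖z‖)⁻¹ • (z.re • Complex.reCLM + z.im • Complex.imCLM)

lemma cabsD_apply (z w : ℂ) :
    cabsD z w = (z.re * w.re + z.im * w.im) / ‖z‖ := by
  simp [cabsD, div_eq_inv_mul, mul_add]

lemma hasFDerivAt_cabs {z : ℂ} (hz : z ≠ 0) :
    HasFDerivAt (fun w : ℂ => ‖w‖) (cabsD z) z := by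
  have habs : (‖z‖ : ℝ) ≠ 0 := norm_ne_zero_iff.mpr hz
  have h1 : HasFDerivAt (fun w : ℂ => w.re * w.re + w.im * w.im)
      ((z.re • Complex.reCLM + z.re • Complex.reCLM)
        + (z.im • Complex.imCLM + z.im • Complex.imCLM)) z :=
    ((Complex.reCLM.hasFDerivAt (x := z)).mul (Complex.reCLM.hasFDerivAt (x := z))).add
      ((Complex.imCLM.hasFDerivAt (x := z)).mul (Complex.imCLM.hasFDerivAt (x := z)))
  have hs : z.re * z.re + z.im * z.im = (‖z‖) ^ 2 := by
    rw [← Complex.normSq_apply, ← Complex.sq_norm]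
  have hsq : HasDerivAt Real.sqrt (1 / (2 * Real.sqrt (z.re * z.re + z.im * z.im)))
      (z.re * z.re + z.im * z.im) := by
    apply Real.hasDerivAt_sqrt
    rw [hs]; positivity
  have h2 := hsq.comp_hasFDerivAt z h1
  have heq : (Real.sqrt ∘ fun w : ℂ => w.re * w.re + w.im * w.im) = (fun w : ℂ => ‖w‖) := by
    funext w
    simp only [Function.comp]
    rw [Complex.norm_def, Complex.normSq_apply]
  rw [show (Real.sqrt ∘ fun w : ℂ => w.re * w.re + w.im * w.im) = (fun w : ℂ => ‖w‖) from heq] at h2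
  refine h2.congr_fderiv ?_
  ext w
  · simp only [cabsD, ContinuousLinearMap.smul_apply, ContinuousLinearMap.add_apply,
      ContinuousLinearMap.coe_smul', Pi.smul_apply, Complex.reCLM_apply, Complex.imCLM_apply,
      smul_eq_mul]
    rw [hs, Real.sqrt_sq (by positivity)]
    field_simp
    ring

section
variable {m : ℕ}

noncomputable def Phi (m : ℕ) (zt : (Fin (m+1) → ℂ) × ℝ) : (Fin m → ℂ) × ℝ × ℝ :=
  (fun j => zt.1 (Fin.castLE m.le_succ j), ‖zt.1 (Fin.last m)‖, zt.2)

noncomputable def dPhi (m : ℕ) (x : (Fin (m+1) → ℂ) × ℝ) :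
    ((Fin (m+1) → ℂ) × ℝ) →L[ℝ] (Fin m → ℂ) × ℝ × ℝ :=
  ((ContinuousLinearMap.pi fun j : Fin m =>
      (ContinuousLinearMap.proj (R := ℝ) (φ := fun _ : Fin (m+1) => ℂ)
        (Fin.castLE m.le_succ j))).comp
    (ContinuousLinearMap.fst ℝ (Fin (m+1) → ℂ) ℝ)).prod
  (((cabsD (x.1 (Fin.last m))).comp
      ((ContinuousLinearMap.proj (R := ℝ) (φ := fun _ : Fin (m+1) => ℂ) (Fin.last m)).comp
        (ContinuousLinearMap.fst ℝ (Fin (m+1) → ℂ) ℝ))).prod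
    (ContinuousLinearMap.snd ℝ (Fin (m+1) → ℂ) ℝ))

lemma hasFDerivAt_Phi {x : (Fin (m+1) → ℂ) × ℝ} (hx : x.1 (Fin.last m) ≠ 0) :
    HasFDerivAt (Phi m) (dPhi m x) x := by
  refine HasFDerivAt.prodMk ?_ (HasFDerivAt.prodMk ?_ ?_)
  · exact ((ContinuousLinearMap.pi fun j : Fin m =>
      (ContinuousLinearMap.proj (R := ℝ) (φ := fun _ : Fin (m+1) => ℂ)
        (Fin.castLE m.le_succ j))).comp
      (ContinuousLinearMap.fst ℝ (Fin (m+1) → ℂ) ℝ)).hasFDerivAt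
  · exact (hasFDerivAt_cabs hx).comp x
      (((ContinuousLinearMap.proj (R := ℝ) (φ := fun _ : Fin (m+1) => ℂ) (Fin.last m)).comp
        (ContinuousLinearMap.fst ℝ (Fin (m+1) → ℂ) ℝ)).hasFDerivAt)
  · exact (ContinuousLinearMap.snd ℝ (Fin (m+1) → ℂ) ℝ).hasFDerivAt

lemma differentiableAt_Phi {x : (Fin (m+1) → ℂ) × ℝ} (hx : x.1 (Fin.last m) ≠ 0) :
    DifferentiableAt ℝ (Phi m) x := (hasFDerivAt_Phi hx).differentiableAt

lemma pdv_comp {V : (Fin m → ℂ) × ℝ × ℝ → ℂ} {x : (Fin (m+1) → ℂ) × ℝ}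
    (hx : x.1 (Fin.last m) ≠ 0) (hV : DifferentiableAt ℝ V (Phi m x))
    (v : (Fin (m+1) → ℂ) × ℝ) :
    pdv v (fun y => V (Phi m y)) x
      = pdv ((fun j => v.1 (Fin.castLE m.le_succ j)),
          ((x.1 (Fin.last m)).re * (v.1 (Fin.last m)).re
            + (x.1 (Fin.last m)).im * (v.1 (Fin.last m)).im) / ‖x.1 (Fin.last m)‖,
          v.2) V (Phi m x) := by
  have hΦ := hasFDerivAt_Phi hx
  have hcomp := (hV.hasFDerivAt.comp x hΦ).fderiv
  unfold pdv
  rw [show (fun y => V (Phi m y)) = V ∘ Phi m from rfl, hcomp]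
  simp only [ContinuousLinearMap.comp_apply]
  congr 1
  simp [dPhi, cabsD_apply]

end

section
variable {m : ℕ}

lemma pdv_smul {E : Type*} [NormedAddCommGroup E] [NormedSpace ℝ E]
    (c : ℝ) (w : E) (V : E → ℂ) (p : E) :
    pdv (c • w) V p = (c : ℂ) * pdv w V p := by
  unfold pdv
  rw [map_smul, Complex.real_smul]

lemma single_castLE (k j : Fin m) (c : ℂ) :
    (Pi.single (Fin.castLE m.le_succ k) c : Fin (m+1) → ℂ) (Fin.castLE m.le_succ j)
      = (Pi.single k c : Fin m → ℂ) j := by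
  rcases eq_or_ne j k with rfl | h
  · simp
  · rw [Pi.single_eq_of_ne (by simpa using h), Pi.single_eq_of_ne h]

lemma single_last (k : Fin m) (c : ℂ) :
    (Pi.single (Fin.castLE m.le_succ k) c : Fin (m+1) → ℂ) (Fin.last m) = 0 := by
  apply Pi.single_eq_of_ne
  exact fun h => Nat.ne_of_lt k.isLt (congrArg Fin.val h).symm

lemma single_last_castLE (j : Fin m) (c : ℂ) :
    (Pi.single (Fin.last m) c : Fin (m+1) → ℂ) (Fin.castLE m.le_succ j) = 0 := by
  apply Pi.single_eq_of_ne
  exact fun h => Nat.ne_of_lt j.isLt (congrArg Fin.val h)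

variable {V : (Fin m → ℂ) × ℝ × ℝ → ℂ} {x : (Fin (m+1) → ℂ) × ℝ}

lemma pdv_comp_e (hx : x.1 (Fin.last m) ≠ 0) (hV : DifferentiableAt ℝ V (Phi m x))
    (k : Fin m) :
    pdv (Pi.single (Fin.castLE m.le_succ k) 1, (0 : ℝ)) (fun y => V (Phi m y)) x
      = pdv (Pi.single k 1, (0 : ℝ), (0 : ℝ)) V (Phi m x) := by
  rw [pdv_comp hx hV]
  congr 1
  refine Prod.ext ?_ (Prod.ext ?_ rfl)
  · funext j; exact single_castLE k j 1
  · dsimp only; rw [single_last]; simp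

lemma pdv_comp_f (hx : x.1 (Fin.last m) ≠ 0) (hV : DifferentiableAt ℝ V (Phi m x))
    (k : Fin m) :
    pdv (Pi.single (Fin.castLE m.le_succ k) Complex.I, (0 : ℝ)) (fun y => V (Phi m y)) x
      = pdv (Pi.single k Complex.I, (0 : ℝ), (0 : ℝ)) V (Phi m x) := by
  rw [pdv_comp hx hV]
  congr 1
  refine Prod.ext ?_ (Prod.ext ?_ rfl)
  · funext j; exact single_castLE k j Complex.I
  · dsimp only; rw [single_last]; simp

lemma pdv_comp_eN (hx : x.1 (Fin.last m) ≠ 0) (hV : DifferentiableAt ℝ V (Phi m x)) :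
    pdv (Pi.single (Fin.last m) 1, (0 : ℝ)) (fun y => V (Phi m y)) x
      = (((x.1 (Fin.last m)).re / ‖x.1 (Fin.last m)‖ : ℝ) : ℂ)
          * pdv ((0 : Fin m → ℂ), (1 : ℝ), (0 : ℝ)) V (Phi m x) := by
  rw [pdv_comp hx hV, ← pdv_smul]
  congr 1
  refine Prod.ext ?_ (Prod.ext ?_ ?_)
  · funext j; dsimp only; rw [single_last_castLE]; simp
  · simp
  · simp

lemma pdv_comp_fN (hx : x.1 (Fin.last m) ≠ 0) (hV : DifferentiableAt ℝ V (Phi m x)) :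
    pdv (Pi.single (Fin.last m) Complex.I, (0 : ℝ)) (fun y => V (Phi m y)) x
      = (((x.1 (Fin.last m)).im / ‖x.1 (Fin.last m)‖ : ℝ) : ℂ)
          * pdv ((0 : Fin m → ℂ), (1 : ℝ), (0 : ℝ)) V (Phi m x) := by
  rw [pdv_comp hx hV, ← pdv_smul]
  congr 1
  refine Prod.ext ?_ (Prod.ext ?_ ?_)
  · funext j; dsimp only; rw [single_last_castLE]; simp
  · simp
  · simp

lemma pdv_comp_t (hx : x.1 (Fin.last m) ≠ 0) (hV : DifferentiableAt ℝ V (Phi m x)) :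
    pdv ((0 : Fin (m+1) → ℂ), (1 : ℝ)) (fun y => V (Phi m y)) x
      = pdv ((0 : Fin m → ℂ), (0 : ℝ), (1 : ℝ)) V (Phi m x) := by
  rw [pdv_comp hx hV]
  congr 1
  exact Prod.ext (by funext j; simp) (Prod.ext (by simp) rfl)

end

section
variable {m : ℕ}

lemma contDiffAt_pdv {E F : Type*} [NormedAddCommGroup E] [NormedSpace ℝ E]
    [NormedAddCommGroup F] [NormedSpace ℝ F] {V : E → F} {p : E}
    (hV : ContDiffAt ℝ (⊤ : ℕ∞) V p) (w : E) : ContDiffAt ℝ (⊤ : ℕ∞) (pdv w V) p :=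
  (hV.fderiv_right (by simp)).clm_apply contDiffAt_const

lemma contDiffAt_opA' {V : (Fin m → ℂ) × ℝ × ℝ → ℂ} {p : (Fin m → ℂ) × ℝ × ℝ}
    (hV : ContDiffAt ℝ (⊤ : ℕ∞) V p) (k : Fin m) : ContDiffAt ℝ (⊤ : ℕ∞) (opA' k V) p := by
  unfold opA'
  refine (contDiffAt_pdv hV _).add (ContDiffAt.mul ?_ (contDiffAt_pdv hV _))
  exact Complex.ofRealCLM.contDiff.contDiffAt.comp p
    (contDiffAt_const.mul
      ((Complex.imCLM.comp ((ContinuousLinearMap.proj k).comp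
        (ContinuousLinearMap.fst ℝ (Fin m → ℂ) (ℝ × ℝ)))).contDiff.contDiffAt))

lemma contDiffAt_opB' {V : (Fin m → ℂ) × ℝ × ℝ → ℂ} {p : (Fin m → ℂ) × ℝ × ℝ}
    (hV : ContDiffAt ℝ (⊤ : ℕ∞) V p) (k : Fin m) : ContDiffAt ℝ (⊤ : ℕ∞) (opB' k V) p := by
  unfold opB'
  refine (contDiffAt_pdv hV _).sub (ContDiffAt.mul ?_ (contDiffAt_pdv hV _))
  exact Complex.ofRealCLM.contDiff.contDiffAt.comp p
    (contDiffAt_const.mul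
      ((Complex.reCLM.comp ((ContinuousLinearMap.proj k).comp
        (ContinuousLinearMap.fst ℝ (Fin m → ℂ) (ℝ × ℝ)))).contDiff.contDiffAt))

lemma pdv_congr {E : Type*} [NormedAddCommGroup E] [NormedSpace ℝ E]
    {f g : E → ℂ} {x : E} (h : f =ᶠ[nhds x] g) (v : E) : pdv v f x = pdv v g x := by
  unfold pdv; rw [h.fderiv_eq]

lemma pdv_add {E : Type*} [NormedAddCommGroup E] [NormedSpace ℝ E]
    {f g : E → ℂ} {x : E} (hf : DifferentiableAt ℝ f x) (hg : DifferentiableAt ℝ g x)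
    (v : E) : pdv v (fun y => f y + g y) x = pdv v f x + pdv v g x := by
  unfold pdv; rw [fderiv_fun_add hf hg]; rfl

lemma pdv_sub {E : Type*} [NormedAddCommGroup E] [NormedSpace ℝ E]
    {f g : E → ℂ} {x : E} (hf : DifferentiableAt ℝ f x) (hg : DifferentiableAt ℝ g x)
    (v : E) : pdv v (fun y => f y - g y) x = pdv v f x - pdv v g x := by
  unfold pdv; rw [fderiv_fun_sub hf hg]; rfl

lemma pdv_mul {E : Type*} [NormedAddCommGroup E] [NormedSpace ℝ E]
    {𝔸 : Type*} [NormedCommRing 𝔸] [NormedAlgebra ℝ 𝔸]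
    {f g : E → 𝔸} {x : E} (hf : DifferentiableAt ℝ f x) (hg : DifferentiableAt ℝ g x)
    (v : E) : pdv v (fun y => f y * g y) x = pdv v f x * g x + f x * pdv v g x := by
  unfold pdv; rw [fderiv_fun_mul hf hg]
  simp
  ring

lemma pdv_ofReal {E : Type*} [NormedAddCommGroup E] [NormedSpace ℝ E]
    {c : E → ℝ} {x : E} (hc : DifferentiableAt ℝ c x) (v : E) :
    pdv v (fun y => ((c y : ℝ) : ℂ)) x = ((pdv v c x : ℝ) : ℂ) := by
  unfold pdv
  rw [show (fun y => ((c y : ℝ) : ℂ)) = (Complex.ofRealCLM : ℝ →L[ℝ] ℂ) ∘ c from rfl,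
    (Complex.ofRealCLM.hasFDerivAt.comp x hc.hasFDerivAt).fderiv]
  rfl

end

section
variable {m : ℕ} {x : (Fin (m+1) → ℂ) × ℝ}

lemma hasFDerivAt_re_last (x : (Fin (m+1) → ℂ) × ℝ) :
    HasFDerivAt (fun y : (Fin (m+1) → ℂ) × ℝ => (y.1 (Fin.last m)).re)
      (Complex.reCLM.comp ((ContinuousLinearMap.proj (R := ℝ)
        (φ := fun _ : Fin (m+1) => ℂ) (Fin.last m)).comp
        (ContinuousLinearMap.fst ℝ (Fin (m+1) → ℂ) ℝ))) x :=
  (Complex.reCLM.comp ((ContinuousLinearMap.proj (R := ℝ)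
        (φ := fun _ : Fin (m+1) => ℂ) (Fin.last m)).comp
        (ContinuousLinearMap.fst ℝ (Fin (m+1) → ℂ) ℝ))).hasFDerivAt

lemma hasFDerivAt_im_last (x : (Fin (m+1) → ℂ) × ℝ) :
    HasFDerivAt (fun y : (Fin (m+1) → ℂ) × ℝ => (y.1 (Fin.last m)).im)
      (Complex.imCLM.comp ((ContinuousLinearMap.proj (R := ℝ)
        (φ := fun _ : Fin (m+1) => ℂ) (Fin.last m)).comp
        (ContinuousLinearMap.fst ℝ (Fin (m+1) → ℂ) ℝ))) x :=
  (Complex.imCLM.comp ((ContinuousLinearMap.proj (R := ℝ)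
        (φ := fun _ : Fin (m+1) => ℂ) (Fin.last m)).comp
        (ContinuousLinearMap.fst ℝ (Fin (m+1) → ℂ) ℝ))).hasFDerivAt

lemma hasFDerivAt_abs_last (hx : x.1 (Fin.last m) ≠ 0) :
    HasFDerivAt (fun y : (Fin (m+1) → ℂ) × ℝ => ‖y.1 (Fin.last m)‖)
      ((cabsD (x.1 (Fin.last m))).comp ((ContinuousLinearMap.proj (R := ℝ)
        (φ := fun _ : Fin (m+1) => ℂ) (Fin.last m)).comp
        (ContinuousLinearMap.fst ℝ (Fin (m+1) → ℂ) ℝ))) x :=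
  (hasFDerivAt_cabs hx).comp x
    (((ContinuousLinearMap.proj (R := ℝ) (φ := fun _ : Fin (m+1) => ℂ) (Fin.last m)).comp
        (ContinuousLinearMap.fst ℝ (Fin (m+1) → ℂ) ℝ)).hasFDerivAt)

lemma pdv_re_last (v : (Fin (m+1) → ℂ) × ℝ) :
    pdv v (fun y : (Fin (m+1) → ℂ) × ℝ => (y.1 (Fin.last m)).re) x
      = (v.1 (Fin.last m)).re := by
  unfold pdv; rw [(hasFDerivAt_re_last x).fderiv]; rfl

lemma pdv_im_last (v : (Fin (m+1) → ℂ) × ℝ) :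
    pdv v (fun y : (Fin (m+1) → ℂ) × ℝ => (y.1 (Fin.last m)).im) x
      = (v.1 (Fin.last m)).im := by
  unfold pdv; rw [(hasFDerivAt_im_last x).fderiv]; rfl

lemma pdv_abs_last (hx : x.1 (Fin.last m) ≠ 0) (v : (Fin (m+1) → ℂ) × ℝ) :
    pdv v (fun y : (Fin (m+1) → ℂ) × ℝ => ‖y.1 (Fin.last m)‖) x
      = ((x.1 (Fin.last m)).re * (v.1 (Fin.last m)).re
          + (x.1 (Fin.last m)).im * (v.1 (Fin.last m)).im)
            / ‖x.1 (Fin.last m)‖ := by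
  unfold pdv; rw [(hasFDerivAt_abs_last hx).fderiv]
  simp [cabsD_apply]

lemma pdv_inv_abs (hx : x.1 (Fin.last m) ≠ 0) (v : (Fin (m+1) → ℂ) × ℝ) :
    pdv v (fun y : (Fin (m+1) → ℂ) × ℝ => (‖y.1 (Fin.last m)‖)⁻¹) x
      = -(((x.1 (Fin.last m)).re * (v.1 (Fin.last m)).re
            + (x.1 (Fin.last m)).im * (v.1 (Fin.last m)).im)
          / ‖x.1 (Fin.last m)‖ ^ 3) := by
  have habs : ‖x.1 (Fin.last m)‖ ≠ 0 := norm_ne_zero_iff.mpr hx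
  have h := ((hasFDerivAt_inv' (𝕜 := ℝ) habs).comp x (hasFDerivAt_abs_last hx)).fderiv
  unfold pdv
  rw [show (fun y : (Fin (m+1) → ℂ) × ℝ => (‖y.1 (Fin.last m)‖)⁻¹)
      = Inv.inv ∘ (fun y : (Fin (m+1) → ℂ) × ℝ => ‖y.1 (Fin.last m)‖) from rfl, h]
  simp [cabsD_apply]
  ring

lemma diffAt_inv_abs (hx : x.1 (Fin.last m) ≠ 0) :
    DifferentiableAt ℝ
      (fun y : (Fin (m+1) → ℂ) × ℝ => (‖y.1 (Fin.last m)‖)⁻¹) x :=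
  ((hasFDerivAt_inv' (𝕜 := ℝ) (norm_ne_zero_iff.mpr hx)).comp x
    (hasFDerivAt_abs_last hx)).differentiableAt

end

section
variable {m : ℕ} {U : (Fin m → ℂ) × ℝ × ℝ → ℂ} {x : (Fin (m+1) → ℂ) × ℝ}

lemma hUopen : IsOpen {p : (Fin m → ℂ) × ℝ × ℝ | 0 < p.2.1} :=
  isOpen_lt continuous_const (continuous_fst.comp continuous_snd)

lemma hSopen : IsOpen {y : (Fin (m+1) → ℂ) × ℝ | y.1 (Fin.last m) ≠ 0} :=
  isOpen_compl_singleton.preimage ((continuous_apply (Fin.last m)).comp continuous_fst)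

lemma hCU (hU : ContDiffOn ℝ (⊤ : ℕ∞) U {p : (Fin m → ℂ) × ℝ × ℝ | 0 < p.2.1})
    (hx : x.1 (Fin.last m) ≠ 0) : ContDiffAt ℝ (⊤ : ℕ∞) U (Phi m x) :=
  hU.contDiffAt (hUopen.mem_nhds (norm_pos_iff.mpr hx))

lemma pdv_two_im (v : (Fin (m+1) → ℂ) × ℝ) :
    pdv v (fun y : (Fin (m+1) → ℂ) × ℝ => 2 * (y.1 (Fin.last m)).im) x
      = 2 * (v.1 (Fin.last m)).im := by
  unfold pdv
  rw [((hasFDerivAt_im_last x).const_mul (2:ℝ)).fderiv]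
  simp

lemma pdv_two_re (v : (Fin (m+1) → ℂ) × ℝ) :
    pdv v (fun y : (Fin (m+1) → ℂ) × ℝ => 2 * (y.1 (Fin.last m)).re) x
      = 2 * (v.1 (Fin.last m)).re := by
  unfold pdv
  rw [((hasFDerivAt_re_last x).const_mul (2:ℝ)).fderiv]
  simp

lemma pdv_scaled (hx : x.1 (Fin.last m) ≠ 0) {c : (Fin (m+1) → ℂ) × ℝ → ℝ}
    (hc : DifferentiableAt ℝ c x) {V : (Fin m → ℂ) × ℝ × ℝ → ℂ}
    (hV : ContDiffAt ℝ (⊤ : ℕ∞) V (Phi m x)) (v : (Fin (m+1) → ℂ) × ℝ) :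
    pdv v (fun y => ((c y : ℝ) : ℂ) * V (Phi m y)) x
      = ((pdv v c x : ℝ) : ℂ) * V (Phi m x)
        + ((c x : ℝ) : ℂ) * pdv v (fun y => V (Phi m y)) x := by
  have hoc : DifferentiableAt ℝ (fun y => ((c y : ℝ) : ℂ)) x :=
    Complex.ofRealCLM.differentiableAt.comp x hc
  have hVΦ : DifferentiableAt ℝ (fun y => V (Phi m y)) x :=
    (hV.differentiableAt (by simp)).comp x (differentiableAt_Phi hx)
  rw [pdv_mul hoc hVΦ, pdv_ofReal hc]

set_option maxHeartbeats 2000000 in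
lemma last_sum (hU : ContDiffOn ℝ (⊤ : ℕ∞) U {p : (Fin m → ℂ) × ℝ × ℝ | 0 < p.2.1})
    (hx : x.1 (Fin.last m) ≠ 0) :
    opA (Fin.last m) (opA (Fin.last m) (fun y => U (Phi m y))) x
      + opB (Fin.last m) (opB (Fin.last m) (fun y => U (Phi m y))) x
    = (((‖x.1 (Fin.last m)‖)⁻¹ : ℝ) : ℂ)
        * pdv ((0 : Fin m → ℂ), (1:ℝ), (0:ℝ)) U (Phi m x)
      + pdv ((0 : Fin m → ℂ), (1:ℝ), (0:ℝ))
          (pdv ((0 : Fin m → ℂ), (1:ℝ), (0:ℝ)) U) (Phi m x)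
      + ((4 * ‖x.1 (Fin.last m)‖ ^ 2 : ℝ) : ℂ)
        * pdv ((0 : Fin m → ℂ), (0:ℝ), (1:ℝ))
            (pdv ((0 : Fin m → ℂ), (0:ℝ), (1:ℝ)) U) (Phi m x) := by
  have habs : ‖x.1 (Fin.last m)‖ ≠ 0 := norm_ne_zero_iff.mpr hx
  have hdU : ∀ y : (Fin (m+1) → ℂ) × ℝ, y.1 (Fin.last m) ≠ 0 →
      DifferentiableAt ℝ U (Phi m y) :=
    fun y hy => ((hCU hU hy).differentiableAt (by simp))
  -- smoothness of first derivatives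
  have hG1 : ContDiffAt ℝ (⊤ : ℕ∞) (pdv ((0 : Fin m → ℂ), (1:ℝ), (0:ℝ)) U) (Phi m x) :=
    contDiffAt_pdv (hCU hU hx) _
  have hG2 : ContDiffAt ℝ (⊤ : ℕ∞) (pdv ((0 : Fin m → ℂ), (0:ℝ), (1:ℝ)) U) (Phi m x) :=
    contDiffAt_pdv (hCU hU hx) _
  -- scalar coefficient functions
  have hdc1 : DifferentiableAt ℝ
      (fun y : (Fin (m+1) → ℂ) × ℝ => (y.1 (Fin.last m)).re
        * (‖y.1 (Fin.last m)‖)⁻¹) x :=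
    (hasFDerivAt_re_last x).differentiableAt.mul (diffAt_inv_abs hx)
  have hdd1 : DifferentiableAt ℝ
      (fun y : (Fin (m+1) → ℂ) × ℝ => (y.1 (Fin.last m)).im
        * (‖y.1 (Fin.last m)‖)⁻¹) x :=
    (hasFDerivAt_im_last x).differentiableAt.mul (diffAt_inv_abs hx)
  have hdc2 : DifferentiableAt ℝ
      (fun y : (Fin (m+1) → ℂ) × ℝ => 2 * (y.1 (Fin.last m)).im) x :=
    ((hasFDerivAt_im_last x).const_mul (2:ℝ)).differentiableAt
  have hdd2 : DifferentiableAt ℝ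
      (fun y : (Fin (m+1) → ℂ) × ℝ => 2 * (y.1 (Fin.last m)).re) x :=
    ((hasFDerivAt_re_last x).const_mul (2:ℝ)).differentiableAt
  -- eventual identities for the inner operators
  have hevA : opA (Fin.last m) (fun y => U (Phi m y)) =ᶠ[nhds x]
      fun y => (((y.1 (Fin.last m)).re * (‖y.1 (Fin.last m)‖)⁻¹ : ℝ) : ℂ)
          * pdv ((0 : Fin m → ℂ), (1:ℝ), (0:ℝ)) U (Phi m y)
        + ((2 * (y.1 (Fin.last m)).im : ℝ) : ℂ)
          * pdv ((0 : Fin m → ℂ), (0:ℝ), (1:ℝ)) U (Phi m y) := by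
    filter_upwards [hSopen.mem_nhds hx] with y hy
    unfold opA
    rw [pdv_comp_eN hy (hdU y hy), pdv_comp_t hy (hdU y hy), div_eq_mul_inv]
  have hevB : opB (Fin.last m) (fun y => U (Phi m y)) =ᶠ[nhds x]
      fun y => (((y.1 (Fin.last m)).im * (‖y.1 (Fin.last m)‖)⁻¹ : ℝ) : ℂ)
          * pdv ((0 : Fin m → ℂ), (1:ℝ), (0:ℝ)) U (Phi m y)
        - ((2 * (y.1 (Fin.last m)).re : ℝ) : ℂ)
          * pdv ((0 : Fin m → ℂ), (0:ℝ), (1:ℝ)) U (Phi m y) := by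
    filter_upwards [hSopen.mem_nhds hx] with y hy
    unfold opB
    rw [pdv_comp_fN hy (hdU y hy), pdv_comp_t hy (hdU y hy), div_eq_mul_inv]
  -- differentiability of the two products
  have hprod1 : DifferentiableAt ℝ
      (fun y => (((y.1 (Fin.last m)).re * (‖y.1 (Fin.last m)‖)⁻¹ : ℝ) : ℂ)
        * pdv ((0 : Fin m → ℂ), (1:ℝ), (0:ℝ)) U (Phi m y)) x :=
    (Complex.ofRealCLM.differentiableAt.comp x hdc1).mul
      ((hG1.differentiableAt (by simp)).comp x (differentiableAt_Phi hx))
  have hprod2 : DifferentiableAt ℝ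
      (fun y => ((2 * (y.1 (Fin.last m)).im : ℝ) : ℂ)
        * pdv ((0 : Fin m → ℂ), (0:ℝ), (1:ℝ)) U (Phi m y)) x :=
    (Complex.ofRealCLM.differentiableAt.comp x hdc2).mul
      ((hG2.differentiableAt (by simp)).comp x (differentiableAt_Phi hx))
  have hprod3 : DifferentiableAt ℝ
      (fun y => (((y.1 (Fin.last m)).im * (‖y.1 (Fin.last m)‖)⁻¹ : ℝ) : ℂ)
        * pdv ((0 : Fin m → ℂ), (1:ℝ), (0:ℝ)) U (Phi m y)) x :=
    (Complex.ofRealCLM.differentiableAt.comp x hdd1).mul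
      ((hG1.differentiableAt (by simp)).comp x (differentiableAt_Phi hx))
  have hprod4 : DifferentiableAt ℝ
      (fun y => ((2 * (y.1 (Fin.last m)).re : ℝ) : ℂ)
        * pdv ((0 : Fin m → ℂ), (0:ℝ), (1:ℝ)) U (Phi m y)) x :=
    (Complex.ofRealCLM.differentiableAt.comp x hdd2).mul
      ((hG2.differentiableAt (by simp)).comp x (differentiableAt_Phi hx))
  rw [opA, opB]
  rw [pdv_congr hevA, pdv_congr hevA, pdv_congr hevB, pdv_congr hevB]
  rw [pdv_add hprod1 hprod2, pdv_add hprod1 hprod2,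
    pdv_sub hprod3 hprod4, pdv_sub hprod3 hprod4]
  rw [pdv_scaled hx hdc1 hG1, pdv_scaled hx hdc2 hG2,
    pdv_scaled hx hdd1 hG1, pdv_scaled hx hdd2 hG2,
    pdv_scaled hx hdc1 hG1, pdv_scaled hx hdc2 hG2,
    pdv_scaled hx hdd1 hG1, pdv_scaled hx hdd2 hG2]
  rw [pdv_comp_eN hx (hG1.differentiableAt (by simp)),
    pdv_comp_eN hx (hG2.differentiableAt (by simp)),
    pdv_comp_fN hx (hG1.differentiableAt (by simp)),
    pdv_comp_fN hx (hG2.differentiableAt (by simp)),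
    pdv_comp_t hx (hG1.differentiableAt (by simp)),
    pdv_comp_t hx (hG2.differentiableAt (by simp))]
  rw [pdv_mul (hasFDerivAt_re_last x).differentiableAt (diffAt_inv_abs hx),
    pdv_mul (hasFDerivAt_im_last x).differentiableAt (diffAt_inv_abs hx),
    pdv_mul (hasFDerivAt_re_last x).differentiableAt (diffAt_inv_abs hx),
    pdv_mul (hasFDerivAt_im_last x).differentiableAt (diffAt_inv_abs hx)]
  simp only [pdv_re_last, pdv_im_last, pdv_inv_abs hx, pdv_two_im, pdv_two_re]
  simp only [Pi.single_eq_same, Complex.one_re, Complex.one_im, Complex.I_re, Complex.I_im]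
  set ρ : ℝ := ‖x.1 (Fin.last m)‖ with hρdef
  set α : ℝ := (x.1 (Fin.last m)).re
  set β : ℝ := (x.1 (Fin.last m)).im
  have hs : α ^ 2 + β ^ 2 = ρ ^ 2 := by
    rw [hρdef, Complex.sq_norm, Complex.normSq_apply]; ring
  set P1 : ℂ := pdv ((0 : Fin m → ℂ), (1:ℝ), (0:ℝ)) U (Phi m x)
  set P2 : ℂ := pdv ((0 : Fin m → ℂ), (1:ℝ), (0:ℝ))
    (pdv ((0 : Fin m → ℂ), (1:ℝ), (0:ℝ)) U) (Phi m x)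
  set P3 : ℂ := pdv ((0 : Fin m → ℂ), (0:ℝ), (1:ℝ))
    (pdv ((0 : Fin m → ℂ), (1:ℝ), (0:ℝ)) U) (Phi m x)
  set P4 : ℂ := pdv ((0 : Fin m → ℂ), (1:ℝ), (0:ℝ))
    (pdv ((0 : Fin m → ℂ), (0:ℝ), (1:ℝ)) U) (Phi m x)
  set P5 : ℂ := pdv ((0 : Fin m → ℂ), (0:ℝ), (1:ℝ))
    (pdv ((0 : Fin m → ℂ), (0:ℝ), (1:ℝ)) U) (Phi m x)
  have hsC : (α:ℂ) ^ 2 + (β:ℂ) ^ 2 = (ρ:ℂ) ^ 2 := by exact_mod_cast hs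
  have hρC : (ρ:ℂ) ≠ 0 := by exact_mod_cast habs
  push_cast
  field_simp [hρC]
  simp only [Pi.zero_apply, Complex.zero_re, Complex.zero_im, Complex.ofReal_zero]
  linear_combination (-P1 + P2 * (ρ:ℂ) + 4 * P5 * (ρ:ℂ)^3) * hsC

lemma cast_termA (hU : ContDiffOn ℝ (⊤ : ℕ∞) U {p : (Fin m → ℂ) × ℝ × ℝ | 0 < p.2.1})
    (hx : x.1 (Fin.last m) ≠ 0) (k : Fin m) :
    opA (Fin.castSucc k) (opA (Fin.castSucc k) (fun y => U (Phi m y))) x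
      = opA' k (opA' k U) (Phi m x) := by
  simp only [show Fin.castSucc k = Fin.castLE m.le_succ k from rfl]
  have hdU : ∀ y : (Fin (m+1) → ℂ) × ℝ, y.1 (Fin.last m) ≠ 0 →
      DifferentiableAt ℝ U (Phi m y) :=
    fun y hy => ((hCU hU hy).differentiableAt (by simp))
  have hev : opA (Fin.castLE m.le_succ k) (fun y => U (Phi m y)) =ᶠ[nhds x]
      fun y => opA' k U (Phi m y) := by
    filter_upwards [hSopen.mem_nhds hx] with y hy
    rw [opA, opA']
    rw [pdv_comp_e hy (hdU y hy) k, pdv_comp_t hy (hdU y hy)]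
    rfl
  have hV : DifferentiableAt ℝ (opA' k U) (Phi m x) :=
    (contDiffAt_opA' (hCU hU hx) k).differentiableAt (by simp)
  rw [opA]
  rw [pdv_congr hev, pdv_congr hev]
  rw [pdv_comp_e hx hV k, pdv_comp_t hx hV]
  rfl

lemma cast_termB (hU : ContDiffOn ℝ (⊤ : ℕ∞) U {p : (Fin m → ℂ) × ℝ × ℝ | 0 < p.2.1})
    (hx : x.1 (Fin.last m) ≠ 0) (k : Fin m) :
    opB (Fin.castSucc k) (opB (Fin.castSucc k) (fun y => U (Phi m y))) x
      = opB' k (opB' k U) (Phi m x) := by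
  simp only [show Fin.castSucc k = Fin.castLE m.le_succ k from rfl]
  have hdU : ∀ y : (Fin (m+1) → ℂ) × ℝ, y.1 (Fin.last m) ≠ 0 →
      DifferentiableAt ℝ U (Phi m y) :=
    fun y hy => ((hCU hU hy).differentiableAt (by simp))
  have hev : opB (Fin.castLE m.le_succ k) (fun y => U (Phi m y)) =ᶠ[nhds x]
      fun y => opB' k U (Phi m y) := by
    filter_upwards [hSopen.mem_nhds hx] with y hy
    rw [opB, opB']
    rw [pdv_comp_f hy (hdU y hy) k, pdv_comp_t hy (hdU y hy)]
    rfl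
  have hV : DifferentiableAt ℝ (opB' k U) (Phi m x) :=
    (contDiffAt_opB' (hCU hU hx) k).differentiableAt (by simp)
  rw [opB]
  rw [pdv_congr hev, pdv_congr hev]
  rw [pdv_comp_f hx hV k, pdv_comp_t hx hV]
  rfl

end

set_option maxHeartbeats 2000000 in
lemma main_aux (m : ℕ) (a : ℝ) (U : (Fin m → ℂ) × ℝ × ℝ → ℂ)
    (hU : ContDiffOn ℝ (⊤ : ℕ∞) U {p : (Fin m → ℂ) × ℝ × ℝ | 0 < p.2.1})
    (x : (Fin (m+1) → ℂ) × ℝ) (hx : x.1 (Fin.last m) ≠ 0) :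
    crLapA (m+1) (Nat.succ_pos m) a (fun zt => U (Phi m zt)) x
      = ((‖x.1 (Fin.last m)‖ ^ 2 : ℝ) : ℂ) *
          (crLap' m U (Phi m x)
            + ((a + 1 : ℝ) : ℂ) * ((‖x.1 (Fin.last m)‖ : ℝ) : ℂ)⁻¹ *
              pdv ((0 : Fin m → ℂ), (1:ℝ), (0:ℝ)) U (Phi m x)
            + pdv ((0 : Fin m → ℂ), (1:ℝ), (0:ℝ))
                (pdv ((0 : Fin m → ℂ), (1:ℝ), (0:ℝ)) U) (Phi m x)
            + ((4 * ‖x.1 (Fin.last m)‖ ^ 2 : ℝ) : ℂ) *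
              pdv ((0 : Fin m → ℂ), (0:ℝ), (1:ℝ))
                (pdv ((0 : Fin m → ℂ), (0:ℝ), (1:ℝ)) U) (Phi m x)) := by
  have hidx : (⟨m + 1 - 1, Nat.sub_lt (Nat.succ_pos m) Nat.one_pos⟩ : Fin (m+1))
      = Fin.last m := rfl
  have hdU : DifferentiableAt ℝ U (Phi m x) := (hCU hU hx).differentiableAt (by simp)
  rw [crLapA, crLap]
  simp only [hidx]
  rw [Fin.sum_univ_castSucc
    (f := fun j => opA j (opA j (fun zt => U (Phi m zt))) x
      + opB j (opB j (fun zt => U (Phi m zt))) x)]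
  have hsum : ∑ k : Fin m,
      (opA (Fin.castSucc k) (opA (Fin.castSucc k) (fun zt => U (Phi m zt))) x
        + opB (Fin.castSucc k) (opB (Fin.castSucc k) (fun zt => U (Phi m zt))) x)
      = ∑ k : Fin m, (opA' k (opA' k U) (Phi m x) + opB' k (opB' k U) (Phi m x)) :=
    Finset.sum_congr rfl fun k _ => by rw [cast_termA hU hx k, cast_termB hU hx k]
  rw [hsum, last_sum hU hx]
  rw [pdv_comp_eN hx hdU, pdv_comp_fN hx hdU]
  rw [crLap']
  set ρ : ℝ := ‖x.1 (Fin.last m)‖ with hρdef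
  set α : ℝ := (x.1 (Fin.last m)).re
  set β : ℝ := (x.1 (Fin.last m)).im
  have habs : ρ ≠ 0 := norm_ne_zero_iff.mpr hx
  have hs : α ^ 2 + β ^ 2 = ρ ^ 2 := by
    rw [hρdef, Complex.sq_norm, Complex.normSq_apply]; ring
  have hsC : (α:ℂ) ^ 2 + (β:ℂ) ^ 2 = (ρ:ℂ) ^ 2 := by exact_mod_cast hs
  have hρC : (ρ:ℂ) ≠ 0 := by exact_mod_cast habs
  set S : ℂ := ∑ k : Fin m, (opA' k (opA' k U) (Phi m x) + opB' k (opB' k U) (Phi m x))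
  set P1 : ℂ := pdv ((0 : Fin m → ℂ), (1:ℝ), (0:ℝ)) U (Phi m x)
  set P2 : ℂ := pdv ((0 : Fin m → ℂ), (1:ℝ), (0:ℝ))
    (pdv ((0 : Fin m → ℂ), (1:ℝ), (0:ℝ)) U) (Phi m x)
  set P5 : ℂ := pdv ((0 : Fin m → ℂ), (0:ℝ), (1:ℝ))
    (pdv ((0 : Fin m → ℂ), (0:ℝ), (1:ℝ)) U) (Phi m x)
  push_cast
  field_simp [hρC]
  linear_combination (a:ℂ) * P1 * hsC


/-- Let `U` be smooth on `ℂ^{n-1} × (0,∞) × ℝ` and let `u(z,t) = U(ẑ, |z_n|, t)` be the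
associated `z_n`-radial function. Then for `z_n ≠ 0`, writing `ρ = |z_n|` and
`p = (ẑ, ρ, t)`:
`ℒ_a u(z,t) = ρ² (ℒ'U + (a+1) ρ⁻¹ ∂U/∂ρ + ∂²U/∂ρ² + 4ρ² ∂²U/∂t²)(p)`. -/
theorem statement17 (n : ℕ) (hn : 0 < n) (a : ℝ)
    (U : (Fin (n - 1) → ℂ) × ℝ × ℝ → ℂ)
    (hU : ContDiffOn ℝ (⊤ : ℕ∞) U {p : (Fin (n - 1) → ℂ) × ℝ × ℝ | 0 < p.2.1}) :
    ∀ x : (Fin n → ℂ) × ℝ, x.1 ⟨n - 1, Nat.sub_lt hn Nat.one_pos⟩ ≠ 0 →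
      crLapA n hn a
          (fun zt => U (fun j => zt.1 (Fin.castLE (Nat.sub_le n 1) j),
            ‖zt.1 ⟨n - 1, Nat.sub_lt hn Nat.one_pos⟩‖, zt.2)) x
        = ((‖x.1 ⟨n - 1, Nat.sub_lt hn Nat.one_pos⟩‖ ^ 2 : ℝ) : ℂ) *
            (crLap' (n - 1) U
                (fun j => x.1 (Fin.castLE (Nat.sub_le n 1) j),
                  ‖x.1 ⟨n - 1, Nat.sub_lt hn Nat.one_pos⟩‖, x.2)
              + ((a + 1 : ℝ) : ℂ) *
                ((‖x.1 ⟨n - 1, Nat.sub_lt hn Nat.one_pos⟩‖ : ℝ) : ℂ)⁻¹ *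
                pdv ((0 : Fin (n - 1) → ℂ), (1 : ℝ), (0 : ℝ)) U
                  (fun j => x.1 (Fin.castLE (Nat.sub_le n 1) j),
                    ‖x.1 ⟨n - 1, Nat.sub_lt hn Nat.one_pos⟩‖, x.2)
              + pdv ((0 : Fin (n - 1) → ℂ), (1 : ℝ), (0 : ℝ))
                  (pdv ((0 : Fin (n - 1) → ℂ), (1 : ℝ), (0 : ℝ)) U)
                  (fun j => x.1 (Fin.castLE (Nat.sub_le n 1) j),
                    ‖x.1 ⟨n - 1, Nat.sub_lt hn Nat.one_pos⟩‖, x.2)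
              + ((4 * ‖x.1 ⟨n - 1, Nat.sub_lt hn Nat.one_pos⟩‖ ^ 2 : ℝ) : ℂ) *
                pdv ((0 : Fin (n - 1) → ℂ), (0 : ℝ), (1 : ℝ))
                  (pdv ((0 : Fin (n - 1) → ℂ), (0 : ℝ), (1 : ℝ)) U)
                  (fun j => x.1 (Fin.castLE (Nat.sub_le n 1) j),
                    ‖x.1 ⟨n - 1, Nat.sub_lt hn Nat.one_pos⟩‖, x.2)) := by
  obtain ⟨m, rfl⟩ := Nat.exists_eq_succ_of_ne_zero hn.ne'
  intro x hx
  exact main_aux m a U hU x hx
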